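/- The answer to the Most Clicks Problem on the 5 × 5 grid graph is 15: every solvable configuration on the 5 × 5 grid has a solution of Hamming weight at most 15, and some solvable configuration requires exactly 15 clicks in every minimum-weight solution. -/

import Mathlib

/-- The Lights Out map of a finite simple graph `G`:
`Φ_G(x)(v) = x(v) + Σ_{u ~ v} x(u)` over GF(2), as a GF(2)-linear map. -/
def lightsOut {V : Type*} [Fintype V] (G : SimpleGraph V) [DecidableRel G.Adj] :
    (V → ZMod 2) →ₗ[ZMod 2] (V → ZMod 2) where
  toFun x := fun v => x v + ∑ u ∈ G.neighborFinset v, x u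
  map_add' x y := by
    funext v
    simp [Finset.sum_add_distrib]
    ring
  map_smul' c x := by
    funext v
    simp [Finset.mul_sum, mul_add]

/-- The Hamming weight of a GF(2) vector: the number of coordinates equal to 1. -/
def hammingWeight {V : Type*} [Fintype V] (x : V → ZMod 2) : ℕ :=
  (Finset.univ.filter fun v => x v = 1).card

/-- The `n × n` grid graph on `Fin n × Fin n`: two vertices are adjacent when they
agree in one coordinate and differ by exactly 1 in the other. -/
def gridGraph (n : ℕ) : SimpleGraph (Fin n × Fin n) where
  Adj a b := (a.1 = b.1 ∧ (a.2.val + 1 = b.2.val ∨ b.2.val + 1 = a.2.val)) ∨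
             (a.2 = b.2 ∧ (a.1.val + 1 = b.1.val ∨ b.1.val + 1 = a.1.val))
  symm := by
    constructor
    rintro a b (⟨h1, h2⟩ | ⟨h1, h2⟩)
    · exact Or.inl ⟨h1.symm, h2.symm⟩
    · exact Or.inr ⟨h1.symm, h2.symm⟩
  loopless := by
    constructor
    rintro a (⟨_, h | h⟩ | ⟨_, h | h⟩) <;> omega

instance (n : ℕ) : DecidableRel (gridGraph n).Adj := fun a b => by
  unfold gridGraph
  exact inferInstanceAs (Decidable (_ ∨ _))

/-- `d n`: the GF(2)-dimension of the kernel of the Lights Out map of the `n × n` grid. -/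
noncomputable def gridNullity (n : ℕ) : ℕ :=
  Module.finrank (ZMod 2) (LinearMap.ker (lightsOut (gridGraph n)))

/-!
Light chasing: a vector in the kernel of the Lights Out map of the `n × n` grid is determined by
its first row `r`, each further row being forced by the two above it, and `r` extends to a kernel
vector exactly when the row forced below the grid vanishes. For `n = 5` only 4 of the 32 first rows
do, so the kernel is `{0, k₁, k₂, k₁ + k₂}`.

The solutions of a solvable configuration form a coset `y + ker`. Since `k₁` and `k₂` have only 5
common zeros, the four solutions have total weight at most `2 · 25 + 2 · 5 = 60`, so one of them has
weight at most 15. For the configuration lit by `hardSolution` all four solutions have weight at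
least 15.
-/

open SimpleGraph Finset

instance (n : ℕ) : DecidableRel (pathGraph n).Adj := fun _ _ => decidable_of_iff' _ pathGraph_adj

section Weight

variable {V : Type*} [Fintype V]

lemma hammingWeight_eq_sum (x : V → ZMod 2) :
    hammingWeight x = ∑ v, if x v = 1 then 1 else 0 :=
  card_filter _ _

/-- A vertex where `a` or `b` is nonzero carries a `1` in exactly two of the four vectors. -/
lemma hammingWeight_add_le (y a b : V → ZMod 2) :
    hammingWeight y + hammingWeight (y + a) + hammingWeight (y + b) + hammingWeight (y + (a + b)) ≤
      2 * Fintype.card V + 2 * #{v | a v = 0 ∧ b v = 0} := by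
  have cell : ∀ p q r : ZMod 2,
      ((if p = 1 then 1 else 0) + (if p + q = 1 then 1 else 0) + (if p + r = 1 then 1 else 0) +
        (if p + (q + r) = 1 then 1 else 0) : ℕ) ≤ 2 + if q = 0 ∧ r = 0 then 2 else 0 := by
    decide
  calc _ ≤ ∑ v, (2 + if a v = 0 ∧ b v = 0 then 2 else 0) := by
        simp only [hammingWeight_eq_sum, ← sum_add_distrib, Pi.add_apply]
        exact sum_le_sum fun v _ => cell (y v) (a v) (b v)
    _ = _ := by
        rw [sum_add_distrib, ← sum_filter, sum_const, sum_const, card_univ, smul_eq_mul,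
          smul_eq_mul, mul_comm, mul_comm _ 2]

lemma exists_lightsOut_eq_four_mul_hammingWeight_le (G : SimpleGraph V) [DecidableRel G.Adj]
    {b a c : V → ZMod 2} (hb : b ∈ LinearMap.range (lightsOut G)) (ha : lightsOut G a = 0)
    (hc : lightsOut G c = 0) :
    ∃ x, lightsOut G x = b ∧
      4 * hammingWeight x ≤ 2 * Fintype.card V + 2 * #{v | a v = 0 ∧ c v = 0} := by
  obtain ⟨y, rfl⟩ := hb
  have hsum := hammingWeight_add_le y a c
  by_contra! hlarge
  have h₀ := hlarge y rfl
  have h₁ := hlarge (y + a) (by rw [map_add, ha, add_zero])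
  have h₂ := hlarge (y + c) (by rw [map_add, hc, add_zero])
  have h₃ := hlarge (y + (a + c)) (by rw [map_add, map_add, ha, hc, add_zero, add_zero])
  omega

end Weight

lemma sum_neighborFinset_boxProd {α β M : Type*} [AddCommMonoid M] {G : SimpleGraph α}
    {H : SimpleGraph β} (a : α) (b : β) [Fintype (G.neighborSet a)] [Fintype (H.neighborSet b)]
    [Fintype ((G □ H).neighborSet (a, b))] (f : α × β → M) :
    ∑ u ∈ (G □ H).neighborFinset (a, b), f u =
      ∑ a' ∈ G.neighborFinset a, f (a', b) + ∑ b' ∈ H.neighborFinset b, f (a, b') := by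
  rw [neighborFinset_boxProd, sum_disjUnion, sum_product, sum_product_right]
  simp only [sum_singleton]

lemma gridGraph_eq_boxProd (n : ℕ) : gridGraph n = pathGraph n □ pathGraph n := by
  ext u v
  simp only [gridGraph, boxProd_adj, pathGraph_adj]
  tauto

section Chase

variable {n : ℕ}

/-- The vector `0, f 0, …, f (n - 1), 0, 0, …`: `f` shifted by one and padded with zeros. -/
def padShift {M : Type*} [Zero M] (f : Fin n → M) (k : ℕ) : M :=
  if h : 0 < k ∧ k ≤ n then f ⟨k - 1, by omega⟩ else 0

variable {M : Type*} [AddCommMonoid M]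

lemma padShift_zero (f : Fin n → M) : padShift f 0 = 0 := by
  simp [padShift]

lemma padShift_succ (f : Fin n → M) (i : Fin n) : padShift f (i + 1) = f i := by
  rw [padShift, dif_pos ⟨i.val.succ_pos, i.isLt⟩]
  rfl

lemma padShift_of_lt (f : Fin n → M) {k : ℕ} (hk : n < k) : padShift f k = 0 := by
  rw [padShift, dif_neg (by omega)]

lemma sum_ite_val_add_one_eq_padShift (f : Fin n → M) (k : ℕ) :
    ∑ i : Fin n, (if i.val + 1 = k then f i else 0) = padShift f k := by
  by_cases hk : 0 < k ∧ k ≤ n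
  · rw [padShift, dif_pos hk, Fintype.sum_eq_single ⟨k - 1, by omega⟩]
    · simp only [ite_eq_left_iff]
      omega
    · intro i hi
      rw [if_neg]
      contrapose! hi
      ext
      simp only
      omega
  · rw [padShift, dif_neg hk]
    exact sum_eq_zero fun i _ => if_neg (by omega)

lemma sum_neighborFinset_pathGraph (f : Fin n → M) (i : Fin n) :
    ∑ i' ∈ (pathGraph n).neighborFinset i, f i' = padShift f i + padShift f (i + 2) := by
  have hsplit : ∀ i' : Fin n, (if (pathGraph n).Adj i i' then f i' else 0) =
      (if i'.val + 1 = i then f i' else 0) + (if i'.val + 1 = i + 2 then f i' else 0) := by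
    intro i'
    simp only [pathGraph_adj]
    split_ifs <;> first | omega | simp
  rw [neighborFinset_eq_filter, sum_filter, sum_congr rfl fun i' _ => hsplit i', sum_add_distrib,
    sum_ite_val_add_one_eq_padShift, sum_ite_val_add_one_eq_padShift]

lemma curry_lightsOut_gridGraph (x : Fin n × Fin n → ZMod 2) (i : Fin n) :
    Function.curry (lightsOut (gridGraph n) x) i = padShift (Function.curry x) i +
      padShift (Function.curry x) (i + 2) + lightsOut (pathGraph n) (Function.curry x i) := by
  ext j
  have hnbr :
      (gridGraph n).neighborFinset (i, j) = (pathGraph n □ pathGraph n).neighborFinset (i, j) := by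
    ext u
    simp only [mem_neighborFinset, gridGraph_eq_boxProd]
  simp only [Function.curry_apply, lightsOut, LinearMap.coe_mk, AddHom.coe_mk, Pi.add_apply, hnbr,
    sum_neighborFinset_boxProd, ← sum_neighborFinset_pathGraph, Finset.sum_apply]
  abel

/-- Light chasing from the first row `r`: index `k + 1` is grid row `k`, index `0` a virtual zero
row above the grid, and each row is chosen so that the Lights Out map vanishes on the row above. -/
def chase (r : Fin n → ZMod 2) : ℕ → Fin n → ZMod 2
  | 0 => 0
  | 1 => r
  | k + 2 => chase r k + lightsOut (pathGraph n) (chase r (k + 1))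

def chaseGrid (r : Fin n → ZMod 2) : Fin n × Fin n → ZMod 2 := fun p => chase r (p.1 + 1) p.2

lemma lightsOut_gridGraph_eq_zero_iff (x : Fin n × Fin n → ZMod 2) :
    lightsOut (gridGraph n) x = 0 ↔ ∀ i : Fin n, padShift (Function.curry x) (i + 2) =
      padShift (Function.curry x) i +
        lightsOut (pathGraph n) (padShift (Function.curry x) (i + 1)) := by
  have hrows :
      lightsOut (gridGraph n) x = 0 ↔ ∀ i, Function.curry (lightsOut (gridGraph n) x) i = 0 :=
    ⟨fun h i => by rw [h]; rfl, fun h => funext fun p => congrFun (h p.1) p.2⟩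
  simp only [hrows, curry_lightsOut_gridGraph, padShift_succ]
  exact forall_congr' fun i => by
    rw [add_right_comm, add_eq_zero_iff_eq_neg, ZModModule.neg_eq_self, eq_comm]

lemma lightsOut_gridGraph_eq_zero_iff_exists_chase (x : Fin n × Fin n → ZMod 2) :
    lightsOut (gridGraph n) x = 0 ↔ ∃ r, chase r (n + 1) = 0 ∧ x = chaseGrid r := by
  rw [lightsOut_gridGraph_eq_zero_iff]
  constructor
  · intro hrec
    set X := padShift (Function.curry x) with hX
    have hchase : ∀ k ≤ n, X k = chase (X 1) k ∧ X (k + 1) = chase (X 1) (k + 1) := by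
      intro k
      induction k with
      | zero => exact fun _ => ⟨padShift_zero _, rfl⟩
      | succ k ih =>
        intro hk
        obtain ⟨h₀, h₁⟩ := ih (by omega)
        refine ⟨h₁, ?_⟩
        rw [chase, ← h₀, ← h₁]
        exact hrec ⟨k, by omega⟩
    refine ⟨X 1, ?_, funext fun p => ?_⟩
    · rw [← (hchase n le_rfl).2, hX, padShift_of_lt _ (by omega)]
    · rw [chaseGrid, ← (hchase (p.1 + 1) p.1.isLt).1, hX, padShift_succ]
      rfl
  · rintro ⟨r, hr, rfl⟩ i
    have hpad : ∀ k ≤ n + 1, padShift (Function.curry (chaseGrid r)) k = chase r k := by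
      rintro (_ | k) hk
      · exact padShift_zero _
      · rcases Nat.lt_or_ge k n with hk | hk
        · exact padShift_succ _ ⟨k, hk⟩
        · obtain rfl : k = n := by omega
          rw [hr, padShift_of_lt _ (by omega)]
    rw [hpad i (by omega), hpad (i + 1) (by omega), hpad (i + 2) (by omega), chase]

end Chase

def hardSolution : Fin 5 × Fin 5 → ZMod 2 := fun p =>
  !![1, 0, 0, 1, 0; 1, 1, 0, 1, 1; 1, 0, 1, 0, 1; 1, 1, 0, 1, 1; 0, 0, 0, 1, 1] p.1 p.2

lemma fifteen_le_hammingWeight_hardSolution_add_chaseGrid :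
    ∀ r : Fin 5 → ZMod 2, chase r 6 = 0 → 15 ≤ hammingWeight (hardSolution + chaseGrid r) := by
  decide +kernel

lemma lightsOut_chaseGrid_five_eq_zero :
    lightsOut (gridGraph 5) (chaseGrid (n := 5) ![0, 1, 1, 1, 0]) = 0 ∧
      lightsOut (gridGraph 5) (chaseGrid (n := 5) ![1, 0, 1, 0, 1]) = 0 :=
  ⟨(lightsOut_gridGraph_eq_zero_iff_exists_chase _).mpr ⟨_, by decide +kernel, rfl⟩,
    (lightsOut_gridGraph_eq_zero_iff_exists_chase _).mpr ⟨_, by decide +kernel, rfl⟩⟩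

lemma card_chaseGrid_five_eq_zero :
    #{v | chaseGrid (n := 5) ![0, 1, 1, 1, 0] v = 0 ∧
      chaseGrid (n := 5) ![1, 0, 1, 0, 1] v = 0} = 5 := by
  decide +kernel

/-- The answer to the Most Clicks Problem on the 5 × 5 grid graph is 15. -/
theorem mcp_five :
    (∀ b ∈ LinearMap.range (lightsOut (gridGraph 5)),
      ∃ x, lightsOut (gridGraph 5) x = b ∧ hammingWeight x ≤ 15) ∧
    (∃ b ∈ LinearMap.range (lightsOut (gridGraph 5)),
      ∀ x, lightsOut (gridGraph 5) x = b → 15 ≤ hammingWeight x) := by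
  constructor
  · intro b hb
    obtain ⟨x, hx, hweight⟩ := exists_lightsOut_eq_four_mul_hammingWeight_le _ hb
      lightsOut_chaseGrid_five_eq_zero.1 lightsOut_chaseGrid_five_eq_zero.2
    rw [card_chaseGrid_five_eq_zero, Fintype.card_prod, Fintype.card_fin] at hweight
    exact ⟨x, hx, by omega⟩
  · refine ⟨_, ⟨hardSolution, rfl⟩, fun x hx => ?_⟩
    have hker : lightsOut (gridGraph 5) (hardSolution + x) = 0 := by
      rw [map_add, hx, ZModModule.add_self]
    obtain ⟨r, hr, hkr⟩ := (lightsOut_gridGraph_eq_zero_iff_exists_chase _).mp hker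
    have hx' : x = hardSolution + chaseGrid r := by
      rw [← hkr, ← add_assoc, ZModModule.add_self, zero_add]
    exact hx' ▸ fifteen_le_hammingWeight_hardSolution_add_chaseGrid r hr
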